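/- arXiv:2409.03312 — 7 statements merged into one kernel-verified Lean document; each statement's English description precedes it below -/
import Mathlib

section
/- Let n and p be positive natural numbers and let f be a multivariate polynomial over ℝ in n variables that is homogeneous of degree 2p. Then there exists a symmetric matrix A indexed by (Fin p → Fin n) × (Fin p → Fin n) with real entries (i.e. Aᵀ = A) such that for every x : Fin n → ℝ, the evaluation of f at x equals (1/2) · Σ_{j,k : Fin p → Fin n} (∏_{i : Fin p} x (j i)) · A j k · (∏_{i : Fin p} x (k i)). -/
/-!
Degree-`n` homogeneous polynomials are spanned by the products `X (g 0) * ⋯ * X (g (n - 1))`,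
since `homogeneousSubmodule σ R n = (span (range X)) ^ n`. Splitting such a product of
`a + b` variables into its first `a` and last `b` factors writes a homogeneous `f` of degree
`a + b` as `∑ j k, B j k • (∏ i, X (j i)) * ∏ i, X (k i)`. For `a = b = p` the matrix `B + Bᵀ`
is symmetric and its quadratic form is twice that of `B`.
-/

open Matrix
open scoped Pointwise

namespace MvPolynomial

variable {σ R : Type*} [CommSemiring R]

theorem range_X_pow (n : ℕ) :
    (Set.range (X : σ → MvPolynomial σ R)) ^ n = Set.range fun g : Fin n → σ => ∏ i, X (g i) := by
  ext f
  simp only [Set.mem_pow_iff_prod, Set.mem_range]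
  constructor
  · rintro ⟨F, hF, rfl⟩
    choose g hg using hF
    exact ⟨g, by simp only [hg]⟩
  · rintro ⟨g, rfl⟩
    exact ⟨fun i => X (g i), fun i => ⟨g i, rfl⟩, rfl⟩

theorem homogeneousSubmodule_eq_span_prod_X (n : ℕ) :
    homogeneousSubmodule σ R n =
      Submodule.span R (Set.range fun g : Fin n → σ => ∏ i, X (g i)) := by
  rw [← homogeneousSubmodule_one_pow, homogeneousSubmodule_one_eq_span_X, Submodule.span_pow,
    range_X_pow]

theorem IsHomogeneous.mem_span_prod_X_mul_prod_X {a b : ℕ} {f : MvPolynomial σ R}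
    (hf : f.IsHomogeneous (a + b)) :
    f ∈ Submodule.span R (Set.range fun jk : (Fin a → σ) × (Fin b → σ) =>
      (∏ i, X (jk.1 i)) * ∏ i, X (jk.2 i)) := by
  rw [← mem_homogeneousSubmodule, homogeneousSubmodule_eq_span_prod_X] at hf
  refine Submodule.span_mono ?_ hf
  rintro _ ⟨g, rfl⟩
  refine ⟨(fun i => g (Fin.castAdd b i), fun i => g (Fin.natAdd a i)), ?_⟩
  exact (Fin.prod_univ_add fun i => (X (g i) : MvPolynomial σ R)).symm

theorem IsHomogeneous.exists_eval_eq_sum_prod_mul_prod [Fintype σ] {a b : ℕ}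
    {f : MvPolynomial σ R} (hf : f.IsHomogeneous (a + b)) :
    ∃ B : Matrix (Fin a → σ) (Fin b → σ) R, ∀ x : σ → R,
      eval x f = ∑ j : Fin a → σ, ∑ k : Fin b → σ, (∏ i, x (j i)) * B j k * ∏ i, x (k i) := by
  obtain ⟨c, rfl⟩ := (Submodule.mem_span_range_iff_exists_fun R).mp hf.mem_span_prod_X_mul_prod_X
  refine ⟨Matrix.of fun j k => c (j, k), fun x => ?_⟩
  simp only [map_sum, Fintype.sum_prod_type, smul_eval, map_mul, map_prod, eval_X, of_apply]
  exact Finset.sum_congr rfl fun _ _ => Finset.sum_congr rfl fun _ _ => by ring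

end MvPolynomial

theorem Matrix.sum_sum_mul_add_transpose_mul {ι R : Type*} [Fintype ι] [CommSemiring R]
    (A : Matrix ι ι R) (u : ι → R) :
    ∑ j, ∑ k, u j * (A + Aᵀ) j k * u k = 2 * ∑ j, ∑ k, u j * A j k * u k := by
  have transpose_eq : ∑ j, ∑ k, u j * Aᵀ j k * u k = ∑ j, ∑ k, u j * A j k * u k := by
    rw [Finset.sum_comm]
    exact Finset.sum_congr rfl fun _ _ => Finset.sum_congr rfl fun _ _ => by
      rw [transpose_apply]; ring
  simp only [Matrix.add_apply, mul_add, add_mul, Finset.sum_add_distrib, transpose_eq]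
  ring

theorem homogeneous_even_degree_tensor_decomposition_general
    (n p : ℕ)
    (f : MvPolynomial (Fin n) ℝ) (hf : f.IsHomogeneous (2 * p)) :
    ∃ A : Matrix (Fin p → Fin n) (Fin p → Fin n) ℝ, Aᵀ = A ∧
      ∀ x : Fin n → ℝ,
        MvPolynomial.eval x f =
          (1 / 2) * ∑ j : Fin p → Fin n, ∑ k : Fin p → Fin n,
            (∏ i : Fin p, x (j i)) * A j k * (∏ i : Fin p, x (k i)) := by
  rw [two_mul] at hf
  obtain ⟨B, hB⟩ := hf.exists_eval_eq_sum_prod_mul_prod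
  refine ⟨B + Bᵀ, by rw [transpose_add, transpose_transpose, add_comm], fun x => ?_⟩
  rw [hB, sum_sum_mul_add_transpose_mul]
  ring

theorem homogeneous_even_degree_tensor_decomposition
    (n p : ℕ) (hn : 0 < n) (hp : 0 < p)
    (f : MvPolynomial (Fin n) ℝ) (hf : f.IsHomogeneous (2 * p)) :
    ∃ A : Matrix (Fin p → Fin n) (Fin p → Fin n) ℝ, Aᵀ = A ∧
      ∀ x : Fin n → ℝ,
        MvPolynomial.eval x f =
          (1 / 2) * ∑ j : Fin p → Fin n, ∑ k : Fin p → Fin n,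
            (∏ i : Fin p, x (j i)) * A j k * (∏ i : Fin p, x (k i)) :=
  homogeneous_even_degree_tensor_decomposition_general n p f hf
end

section
/- Let p, K ≥ 1, and for each α : Fin K and i : Fin p let A α i be a symmetric real n × n matrix. Define f : (Fin n → ℝ) → ℝ by f x = (1/2) · Σ_{α} ∏_{i} (x ⬝ᵥ (A α i *ᵥ x)), D x = Σ_{α} Σ_{j} (∏_{i ≠ j} x ⬝ᵥ (A α i *ᵥ x)) • (A α j), and the Hessian matrix H x = 2 · Σ_{α} Σ_{j ≠ k} (∏_{i ≠ j, i ≠ k} x ⬝ᵥ (A α i *ᵥ x)) • vecMulVec ((A α k) *ᵥ x) ((A α j) *ᵥ x) + D x. Then f is twice differentiable and for all x and all directions u, w, the second Fréchet derivative satisfies iteratedFDeriv ℝ 2 f x ![u, w] = u ⬝ᵥ ((H x) *ᵥ w). -/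
/-! By the Leibniz rule and the symmetry of the `A α i`, each factor `xᵀ A x` of a product
contributes `2 A x` to the gradient, so the factor `1/2` makes the gradient of `f` exactly
`D(x) x`. Differentiating `x ↦ D(x) x` once more, `D(x)` contributes itself and the coefficients
of `D(x)` contribute the rank-one terms `2 (A_j x)(A_k x)ᵀ`: the Jacobian of the gradient is
`H(x)ᵀ`, which `iteratedFDeriv` pairs as `(H(x)ᵀ u) ⬝ w = u ⬝ H(x) w`. -/

open Matrix

variable {m : Type*} [Fintype m]

noncomputable abbrev dotProductCLM : (m → ℝ) →L[ℝ] (m → ℝ) →L[ℝ] ℝ :=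
  (dotProductBilin ℝ ℝ).toContinuousBilinearMap

lemma dotProduct_mulVec_comm_of_transpose_eq {M : Matrix m m ℝ} (hM : Mᵀ = M) (u w : m → ℝ) :
    u ⬝ᵥ (M *ᵥ w) = (M *ᵥ u) ⬝ᵥ w := by
  rw [dotProduct_mulVec, ← mulVec_transpose, hM]

lemma hasFDerivAt_dotProduct_mulVec_self {M : Matrix m m ℝ} (hM : Mᵀ = M) (x : m → ℝ) :
    HasFDerivAt (fun y => y ⬝ᵥ (M *ᵥ y)) (dotProductCLM ((2 : ℝ) • M *ᵥ x)) x := by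
  have h := dotProductCLM.hasFDerivAt_of_bilinear (hasFDerivAt_id x)
    (LinearMap.toContinuousLinearMap M.mulVecLin).hasFDerivAt
  refine h.congr_fderiv (ContinuousLinearMap.ext fun w => ?_)
  simp only [ContinuousLinearMap.precompR_apply, ContinuousLinearMap.precompL_apply,
    ContinuousLinearMap.compL_apply, ContinuousLinearMap.comp_apply, ContinuousLinearMap.id_apply,
    LinearMap.coe_toContinuousLinearMap', mulVecBilin_apply, _root_.add_apply, id_eq,
    LinearMap.toContinuousBilinearMap_apply, dotProductBilin_apply_apply, smul_dotProduct,
    smul_eq_mul]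
  rw [dotProduct_mulVec_comm_of_transpose_eq hM, dotProduct_comm w]
  ring

variable {κ : Type*}

noncomputable def quadFormProd (Q : κ → Matrix m m ℝ) (s : Finset κ) (x : m → ℝ) : ℝ :=
  ∏ i ∈ s, x ⬝ᵥ (Q i *ᵥ x)

lemma contDiff_quadFormProd (Q : κ → Matrix m m ℝ) (s : Finset κ) {k : WithTop ℕ∞} :
    ContDiff ℝ k (quadFormProd Q s) := by
  unfold quadFormProd
  simp only [dotProduct, mulVec]
  fun_prop

lemma hasFDerivAt_quadFormProd [DecidableEq κ] {Q : κ → Matrix m m ℝ} (hQ : ∀ i, (Q i)ᵀ = Q i)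
    (s : Finset κ) (x : m → ℝ) :
    HasFDerivAt (quadFormProd Q s)
      (dotProductCLM ((2 : ℝ) • ∑ i ∈ s, quadFormProd Q (s.erase i) x • Q i *ᵥ x)) x := by
  refine (HasFDerivAt.finsetProd fun i _ =>
    hasFDerivAt_dotProduct_mulVec_self (hQ i) x).congr_fderiv ?_
  simp only [map_smul, map_sum, Finset.smul_sum, quadFormProd]
  exact Finset.sum_congr rfl fun i _ => smul_comm _ _ _

variable {ι : Type*} [Fintype ι] [Fintype κ]

noncomputable def tensorForm (A : ι → κ → Matrix m m ℝ) (x : m → ℝ) : ℝ :=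
  (1 / 2) * ∑ α, quadFormProd (A α) Finset.univ x

lemma contDiff_tensorForm (A : ι → κ → Matrix m m ℝ) {k : WithTop ℕ∞} :
    ContDiff ℝ k (tensorForm A) :=
  contDiff_const.mul (ContDiff.sum fun α _ => contDiff_quadFormProd (A α) _)

variable [DecidableEq κ]

noncomputable def tensorFormGradMatrix (A : ι → κ → Matrix m m ℝ) (x : m → ℝ) : Matrix m m ℝ :=
  ∑ α, ∑ j, quadFormProd (A α) (Finset.univ.erase j) x • A α j

noncomputable def tensorFormHessian (A : ι → κ → Matrix m m ℝ) (x : m → ℝ) : Matrix m m ℝ :=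
  (2 : ℝ) • (∑ α, ∑ j, ∑ k ∈ Finset.univ.erase j,
    quadFormProd (A α) ((Finset.univ.erase j).erase k) x • vecMulVec (A α k *ᵥ x) (A α j *ᵥ x)) +
    tensorFormGradMatrix A x

lemma transpose_tensorFormGradMatrix {A : ι → κ → Matrix m m ℝ} (hA : ∀ α i, (A α i)ᵀ = A α i)
    (x : m → ℝ) : (tensorFormGradMatrix A x)ᵀ = tensorFormGradMatrix A x := by
  simp only [tensorFormGradMatrix, transpose_sum, transpose_smul, hA]

lemma tensorFormGradMatrix_mulVec (A : ι → κ → Matrix m m ℝ) (x v : m → ℝ) :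
    tensorFormGradMatrix A x *ᵥ v =
      ∑ α, ∑ j, quadFormProd (A α) (Finset.univ.erase j) x • A α j *ᵥ v := by
  simp only [tensorFormGradMatrix, sum_mulVec, smul_mulVec]

lemma hasFDerivAt_tensorForm {A : ι → κ → Matrix m m ℝ} (hA : ∀ α i, (A α i)ᵀ = A α i)
    (x : m → ℝ) :
    HasFDerivAt (tensorForm A) (dotProductCLM (tensorFormGradMatrix A x *ᵥ x)) x := by
  refine ((HasFDerivAt.fun_sum fun α _ =>
    hasFDerivAt_quadFormProd (hA α) Finset.univ x).const_mul (1 / 2 : ℝ)).congr_fderiv ?_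
  simp only [tensorFormGradMatrix_mulVec, map_sum, map_smul, ← Finset.smul_sum]
  rw [smul_smul, one_div, inv_mul_cancel₀ two_ne_zero, one_smul]

lemma hasFDerivAt_tensorFormGradMatrix_mulVec {A : ι → κ → Matrix m m ℝ}
    (hA : ∀ α i, (A α i)ᵀ = A α i) (x : m → ℝ) :
    HasFDerivAt (fun y => tensorFormGradMatrix A y *ᵥ y)
      (LinearMap.toContinuousLinearMap (tensorFormHessian A x)ᵀ.mulVecLin) x := by
  simp only [tensorFormGradMatrix_mulVec]
  refine (HasFDerivAt.fun_sum fun α _ => HasFDerivAt.fun_sum fun j _ =>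
    (hasFDerivAt_quadFormProd (hA α) _ x).smul
      (LinearMap.toContinuousLinearMap (A α j).mulVecLin).hasFDerivAt).congr_fderiv ?_
  ext1 u
  simp only [tensorFormHessian, transpose_add, transpose_smul, transpose_sum, transpose_vecMulVec,
    transpose_tensorFormGradMatrix hA, _root_.sum_apply, _root_.add_apply, _root_.smul_apply,
    ContinuousLinearMap.smulRight_apply, LinearMap.coe_toContinuousLinearMap', mulVecLin_apply,
    LinearMap.toContinuousBilinearMap_apply, dotProductBilin_apply_apply, add_mulVec, smul_mulVec,
    sum_mulVec, vecMulVec_mulVec, tensorFormGradMatrix_mulVec, smul_dotProduct, sum_dotProduct,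
    Finset.sum_add_distrib, Finset.smul_sum, Finset.sum_smul, smul_eq_mul, mul_smul,
    op_smul_eq_smul]
  rw [add_comm]

lemma iteratedFDeriv_two_tensorForm_apply {A : ι → κ → Matrix m m ℝ}
    (hA : ∀ α i, (A α i)ᵀ = A α i) (x u w : m → ℝ) :
    iteratedFDeriv ℝ 2 (tensorForm A) x ![u, w] = u ⬝ᵥ (tensorFormHessian A x *ᵥ w) := by
  have hgrad : fderiv ℝ (tensorForm A) = fun y => dotProductCLM (tensorFormGradMatrix A y *ᵥ y) :=
    funext fun y => (hasFDerivAt_tensorForm hA y).fderiv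
  have hhess : HasFDerivAt (fun y => dotProductCLM (tensorFormGradMatrix A y *ᵥ y))
      (dotProductCLM.comp (LinearMap.toContinuousLinearMap (tensorFormHessian A x)ᵀ.mulVecLin)) x :=
    dotProductCLM.hasFDerivAt.comp x (hasFDerivAt_tensorFormGradMatrix_mulVec hA x)
  rw [iteratedFDeriv_two_apply, hgrad, hhess.fderiv]
  simp only [cons_val_zero, cons_val_one, cons_val_fin_one, ContinuousLinearMap.comp_apply,
    LinearMap.coe_toContinuousLinearMap', mulVecLin_apply, LinearMap.toContinuousBilinearMap_apply,
    dotProductBilin_apply_apply, mulVec_transpose]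
  exact (dotProduct_mulVec u _ w).symm

theorem hessian_of_homogeneous_tensor_form_general
    (n p K : ℕ)
    (A : Fin K → Fin p → Matrix (Fin n) (Fin n) ℝ)
    (hA : ∀ α i, (A α i)ᵀ = A α i)
    (f : (Fin n → ℝ) → ℝ)
    (hf : f = fun x => (1 / 2) * ∑ α : Fin K, ∏ i : Fin p, x ⬝ᵥ (A α i *ᵥ x))
    (D : (Fin n → ℝ) → Matrix (Fin n) (Fin n) ℝ)
    (hD : D = fun x => ∑ α : Fin K, ∑ j : Fin p,
      (∏ i ∈ Finset.univ.erase j, x ⬝ᵥ (A α i *ᵥ x)) • A α j)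
    (H : (Fin n → ℝ) → Matrix (Fin n) (Fin n) ℝ)
    (hH : H = fun x =>
      (2 : ℝ) • (∑ α : Fin K, ∑ j : Fin p, ∑ k ∈ Finset.univ.erase j,
        (∏ i ∈ (Finset.univ.erase j).erase k, x ⬝ᵥ (A α i *ᵥ x)) •
          vecMulVec ((A α k) *ᵥ x) ((A α j) *ᵥ x)) + D x) :
    ContDiff ℝ 2 f ∧
      ∀ (x u w : Fin n → ℝ),
        iteratedFDeriv ℝ 2 f x ![u, w] = u ⬝ᵥ ((H x) *ᵥ w) := by
  have hf' : f = tensorForm A := hf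
  have hH' : H = tensorFormHessian A := by rw [hH, hD]; rfl
  subst hf' hH'
  exact ⟨contDiff_tensorForm A, iteratedFDeriv_two_tensorForm_apply hA⟩

theorem hessian_of_homogeneous_tensor_form
    (n p K : ℕ) (hp : 1 ≤ p) (hK : 1 ≤ K)
    (A : Fin K → Fin p → Matrix (Fin n) (Fin n) ℝ)
    (hA : ∀ α i, (A α i)ᵀ = A α i)
    (f : (Fin n → ℝ) → ℝ)
    (hf : f = fun x => (1 / 2) * ∑ α : Fin K, ∏ i : Fin p, x ⬝ᵥ (A α i *ᵥ x))
    (D : (Fin n → ℝ) → Matrix (Fin n) (Fin n) ℝ)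
    (hD : D = fun x => ∑ α : Fin K, ∑ j : Fin p,
      (∏ i ∈ Finset.univ.erase j, x ⬝ᵥ (A α i *ᵥ x)) • A α j)
    (H : (Fin n → ℝ) → Matrix (Fin n) (Fin n) ℝ)
    (hH : H = fun x =>
      (2 : ℝ) • (∑ α : Fin K, ∑ j : Fin p, ∑ k ∈ Finset.univ.erase j,
        (∏ i ∈ (Finset.univ.erase j).erase k, x ⬝ᵥ (A α i *ᵥ x)) •
          vecMulVec ((A α k) *ᵥ x) ((A α j) *ᵥ x)) + D x) :
    ContDiff ℝ 2 f ∧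
      ∀ (x u w : Fin n → ℝ),
        iteratedFDeriv ℝ 2 f x ![u, w] = u ⬝ᵥ ((H x) *ᵥ w) :=
  hessian_of_homogeneous_tensor_form_general n p K A hA f hf D hD H hH
end

section
/- Let κ be a finite type, v : κ → ℝ a vector, and M a real matrix indexed by (κ × Fin n) × (κ × Fin n). Define the n × n compression matrix N by N a b = Σ_{k, l : κ} v k * v l * M (k, a) (l, b). Then ((vecMulVec v v) ⊗ₖ 1) * M * ((vecMulVec v v) ⊗ₖ 1) = (vecMulVec v v) ⊗ₖ N; that is, (vvᵀ ⊗ I) M (vvᵀ ⊗ I) = vvᵀ ⊗ ((vᵀ ⊗ I) M (v ⊗ I)). -/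
open Matrix Kronecker

theorem sandwich_outer_kronecker_id
    (n : ℕ) (κ : Type*) [Fintype κ] [DecidableEq κ]
    (v : κ → ℝ) (M : Matrix (κ × Fin n) (κ × Fin n) ℝ)
    (N : Matrix (Fin n) (Fin n) ℝ)
    (hN : N = Matrix.of fun a b : Fin n => ∑ k : κ, ∑ l : κ, v k * v l * M (k, a) (l, b)) :
    ((vecMulVec v v) ⊗ₖ (1 : Matrix (Fin n) (Fin n) ℝ)) * M *
        ((vecMulVec v v) ⊗ₖ (1 : Matrix (Fin n) (Fin n) ℝ))
      = (vecMulVec v v) ⊗ₖ N := by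
  ext ⟨k, a⟩ ⟨l, b⟩
  simp only [mul_apply, kroneckerMap_apply, vecMulVec_apply, hN, Matrix.of_apply,
    Fintype.sum_prod_type, one_apply, mul_ite, mul_one, mul_zero, ite_mul, zero_mul,
    Finset.sum_ite_eq, Finset.sum_ite_eq', Finset.mem_univ, if_true]
  simp only [Finset.sum_mul, Finset.mul_sum]
  rw [Finset.sum_comm]
  exact Finset.sum_congr rfl fun p _ => Finset.sum_congr rfl fun q _ => by ring
end

section
/- Let h : (Fin n → ℝ) → ℝ be twice continuously differentiable, let c : Fin n → ℝ, and define g : (Fin n → ℝ) → ℝ by g x = (c ⬝ᵥ x) * h x. Then g is twice differentiable and for all x and all directions u, w: iteratedFDeriv ℝ 2 g x ![u, w] = (c ⬝ᵥ x) * iteratedFDeriv ℝ 2 h x ![u, w] + (c ⬝ᵥ u) * (fderiv ℝ h x w) + (c ⬝ᵥ w) * (fderiv ℝ h x u). In matrix terms, the Hessian of g is H(g)(x) = (cᵀx) H(h)(x) + ∇h(x) cᵀ + c ∇h(x)ᵀ. -/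
/-! Apply the product rule twice. The factor `c ⬝ᵥ x` is a continuous linear functional, so its
derivative is itself and its second derivative vanishes; what is left are the two mixed terms. -/

open Matrix

section

variable {𝕜 E F : Type*} [NontriviallyNormedField 𝕜] [NormedAddCommGroup E] [NormedSpace 𝕜 E]
  [NormedAddCommGroup F] [NormedSpace 𝕜 F]

theorem fderiv_clm_smul (L : StrongDual 𝕜 E) {h : E → F} (hh : Differentiable 𝕜 h) :
    fderiv 𝕜 (fun y => L y • h y) =
      fun y => L y • fderiv 𝕜 h y + ContinuousLinearMap.smulRightL 𝕜 E F L (h y) := by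
  funext y
  rw [fderiv_fun_smul L.differentiableAt (hh y), L.fderiv]
  rfl

theorem iteratedFDeriv_two_clm_smul_apply (L : StrongDual 𝕜 E) {h : E → F}
    (hh : ContDiff 𝕜 2 h) (x u w : E) :
    iteratedFDeriv 𝕜 2 (fun y => L y • h y) x ![u, w] =
      L x • iteratedFDeriv 𝕜 2 h x ![u, w] + L u • fderiv 𝕜 h x w + L w • fderiv 𝕜 h x u := by
  have hdh : Differentiable 𝕜 h := hh.differentiable two_ne_zero
  have hd2h : Differentiable 𝕜 (fderiv 𝕜 h) :=
    (hh.fderiv_right (m := 1) le_rfl).differentiable one_ne_zero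
  have hD : HasFDerivAt (fun y => L y • fderiv 𝕜 h y + ContinuousLinearMap.smulRightL 𝕜 E F L (h y))
      _ x := (L.hasFDerivAt.smul (hd2h x).hasFDerivAt).add
    ((ContinuousLinearMap.smulRightL 𝕜 E F L).hasFDerivAt.comp x (hdh x).hasFDerivAt)
  rw [iteratedFDeriv_two_apply, iteratedFDeriv_two_apply, fderiv_clm_smul L hdh, hD.fderiv]
  simp

end

theorem hessian_of_inhomogeneous_product
    (n : ℕ) (h : (Fin n → ℝ) → ℝ) (hh : ContDiff ℝ 2 h)
    (c : Fin n → ℝ) (g : (Fin n → ℝ) → ℝ)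
    (hg : g = fun x => (c ⬝ᵥ x) * h x) :
    ContDiff ℝ 2 g ∧
      ∀ (x u w : Fin n → ℝ),
        iteratedFDeriv ℝ 2 g x ![u, w] =
          (c ⬝ᵥ x) * iteratedFDeriv ℝ 2 h x ![u, w] +
            (c ⬝ᵥ u) * (fderiv ℝ h x w) + (c ⬝ᵥ w) * (fderiv ℝ h x u) := by
  let L : StrongDual ℝ (Fin n → ℝ) := (dotProductBilin ℝ ℝ c).toContinuousLinearMap
  -- `L y • h y` unfolds to `(c ⬝ᵥ y) * h y`, so after `subst` both goals are the general lemmas.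
  subst hg
  exact ⟨L.contDiff.smul hh, iteratedFDeriv_two_clm_smul_apply L hh⟩
end

section
/- Let A be a real symmetric m × m matrix and B a real symmetric n × n matrix (with m, n finite and nonempty). Then the spectrum of the Kronecker product A ⊗ₖ B equals the set of products { a * b | a ∈ spectrum ℝ A, b ∈ spectrum ℝ B }. -/
/-!
Diagonalising `A = U D Uᴴ` and `B = V E Vᴴ` gives `A ⊗ₖ B = (U ⊗ₖ V) (D ⊗ₖ E) (U ⊗ₖ V)ᴴ`,
where `U ⊗ₖ V` is unitary and `D ⊗ₖ E` is diagonal with the pairwise products of eigenvalues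
on its diagonal; conjugation by a unitary does not change the spectrum.
-/

open Matrix Kronecker

theorem Matrix.spectrum_real_diagonal_ofReal {𝕜 n : Type*} [RCLike 𝕜] [Fintype n]
    [DecidableEq n] (d : n → ℝ) :
    spectrum ℝ (diagonal (RCLike.ofReal ∘ d) : Matrix n n 𝕜) = Set.range d :=
  Set.ext fun x => by
    rw [← spectrum.algebraMap_mem_iff 𝕜]
    simp

namespace Matrix.IsHermitian

variable {𝕜 m n : Type*} [RCLike 𝕜] [Fintype m] [DecidableEq m] [Fintype n] [DecidableEq n]
  {A : Matrix m m 𝕜} {B : Matrix n n 𝕜}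

theorem kronecker_eq_conjStarAlgAut (hA : A.IsHermitian) (hB : B.IsHermitian) :
    A ⊗ₖ B = Unitary.conjStarAlgAut 𝕜 (Matrix (m × n) (m × n) 𝕜)
      ⟨_, kronecker_mem_unitary hA.eigenvectorUnitary.2 hB.eigenvectorUnitary.2⟩
      (diagonal (RCLike.ofReal ∘ fun p : m × n => hA.eigenvalues p.1 * hB.eigenvalues p.2)) := by
  conv_lhs => rw [hA.spectral_theorem, hB.spectral_theorem]
  simp only [Unitary.conjStarAlgAut_apply, star_eq_conjTranspose, conjTranspose_kronecker,
    mul_kronecker_mul, diagonal_kronecker_diagonal]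
  simp [Function.comp_def]

theorem spectrum_real_kronecker (hA : A.IsHermitian) (hB : B.IsHermitian) :
    spectrum ℝ (A ⊗ₖ B) = Set.image2 (· * ·) (spectrum ℝ A) (spectrum ℝ B) := by
  rw [hA.spectrum_real_eq_range_eigenvalues, hB.spectrum_real_eq_range_eigenvalues,
    Set.image2_range, kronecker_eq_conjStarAlgAut hA hB, Unitary.conjStarAlgAut_apply,
    Unitary.spectrum_star_right_conjugate, spectrum_real_diagonal_ofReal]

end Matrix.IsHermitian

theorem spectrum_kronecker_symmetric_general
    (m n : Type*) [Fintype m] [DecidableEq m]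
    [Fintype n] [DecidableEq n]
    (A : Matrix m m ℝ) (B : Matrix n n ℝ)
    (hA : Aᵀ = A) (hB : Bᵀ = B) :
    spectrum ℝ (A ⊗ₖ B) =
      {μ : ℝ | ∃ a ∈ spectrum ℝ A, ∃ b ∈ spectrum ℝ B, a * b = μ} :=
  (isHermitian_iff_isSymm.mpr hA).spectrum_real_kronecker (isHermitian_iff_isSymm.mpr hB)

theorem spectrum_kronecker_symmetric
    (m n : Type*) [Fintype m] [DecidableEq m] [Nonempty m]
    [Fintype n] [DecidableEq n] [Nonempty n]
    (A : Matrix m m ℝ) (B : Matrix n n ℝ)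
    (hA : Aᵀ = A) (hB : Bᵀ = B) :
    spectrum ℝ (A ⊗ₖ B) =
      {μ : ℝ | ∃ a ∈ spectrum ℝ A, ∃ b ∈ spectrum ℝ B, a * b = μ} :=
  spectrum_kronecker_symmetric_general m n A B hA hB
end

section
/- Let v : Fin m → ℝ be a unit vector (Σ_k (v k)^2 = 1), let H be a real symmetric n × n matrix (m, n ≥ 1), and let P = vecMulVec v v be the rank-one projector vvᵀ. Then for every nonzero real number μ, μ belongs to the spectrum of P ⊗ₖ H if and only if μ belongs to the spectrum of H. -/
open Matrix Kronecker

lemma mem_spectrum_iff_eigen {k : Type*} [Fintype k] [DecidableEq k]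
    (A : Matrix k k ℝ) (μ : ℝ) :
    μ ∈ spectrum ℝ A ↔ ∃ x : k → ℝ, x ≠ 0 ∧ A *ᵥ x = μ • x := by
  have halg : ∀ x : k → ℝ, (algebraMap ℝ (Matrix k k ℝ) μ) *ᵥ x = μ • x := by
    intro x; ext i; simp [Matrix.algebraMap_eq_diagonal, Matrix.mulVec_diagonal]
  rw [spectrum.mem_iff, Matrix.isUnit_iff_isUnit_det, isUnit_iff_ne_zero, not_not,
    ← Matrix.exists_mulVec_eq_zero_iff]
  constructor
  · rintro ⟨x, hx0, hx⟩
    refine ⟨x, hx0, ?_⟩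
    rw [Matrix.sub_mulVec, halg, sub_eq_zero] at hx
    exact hx.symm
  · rintro ⟨x, hx0, hx⟩
    exact ⟨x, hx0, by rw [Matrix.sub_mulVec, halg, hx, sub_self]⟩

theorem nonzero_spectrum_projector_kronecker
    (m n : ℕ) (hm : 1 ≤ m) (hn : 1 ≤ n)
    (v : Fin m → ℝ) (hv : ∑ k : Fin m, (v k) ^ 2 = 1)
    (H : Matrix (Fin n) (Fin n) ℝ) (hH : Hᵀ = H)
    (P : Matrix (Fin m) (Fin m) ℝ) (hP : P = vecMulVec v v) :
    ∀ μ : ℝ, μ ≠ 0 → (μ ∈ spectrum ℝ (P ⊗ₖ H) ↔ μ ∈ spectrum ℝ H) := by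
  intro μ hμ
  rw [mem_spectrum_iff_eigen, mem_spectrum_iff_eigen]
  constructor
  · rintro ⟨x, hx0, hx⟩
    set y : Fin n → ℝ := fun j => ∑ k, v k * x (k, j) with hy
    have key : ∀ i j, v i * (H *ᵥ y) j = μ * x (i, j) := by
      intro i j
      have h1 := congrFun hx (i, j)
      simp only [Matrix.mulVec, dotProduct, Fintype.sum_prod_type, hP,
        Matrix.kroneckerMap_apply, Matrix.vecMulVec_apply, Pi.smul_apply,
        smul_eq_mul] at h1
      rw [← h1, Matrix.mulVec, dotProduct, hy, Finset.mul_sum]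
      rw [Finset.sum_comm]
      congr 1; ext k
      rw [Finset.mul_sum, Finset.mul_sum]
      congr 1; ext l
      ring
    have heig : ∀ j, (H *ᵥ y) j = μ * y j := by
      intro j
      have h2 : ∑ i, v i * (v i * (H *ᵥ y) j) = ∑ i, v i * (μ * x (i, j)) := by
        exact Finset.sum_congr rfl fun i _ => by rw [key i j]
      calc (H *ᵥ y) j = (∑ i, (v i) ^ 2) * (H *ᵥ y) j := by rw [hv, one_mul]
        _ = ∑ i, v i * (v i * (H *ᵥ y) j) := by rw [Finset.sum_mul]; congr 1; ext i; ring
        _ = ∑ i, v i * (μ * x (i, j)) := h2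
        _ = μ * y j := by rw [hy, Finset.mul_sum]; congr 1; ext i; ring
    have hy0 : y ≠ 0 := by
      intro h
      apply hx0
      ext p
      have := key p.1 p.2
      rw [h, Matrix.mulVec_zero] at this
      simp only [Pi.zero_apply, mul_zero] at this
      exact (mul_eq_zero.mp this.symm).resolve_left hμ
    exact ⟨y, hy0, by ext j; simpa using heig j⟩
  · rintro ⟨y, hy0, hy⟩
    have hvne : ∃ i, v i ≠ 0 := by
      by_contra h
      push_neg at h
      have : (∑ k : Fin m, (v k) ^ 2) = 0 := by
        apply Finset.sum_eq_zero; intro k _; rw [h k]; ring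
      rw [hv] at this; norm_num at this
    obtain ⟨i0, hi0⟩ := hvne
    obtain ⟨j0, hj0⟩ : ∃ j, y j ≠ 0 := by
      by_contra h; push_neg at h; exact hy0 (funext h)
    refine ⟨fun p => v p.1 * y p.2, ?_, ?_⟩
    · intro h
      have := congrFun h (i0, j0)
      simp only [Pi.zero_apply] at this
      exact hj0 (by rcases mul_eq_zero.mp this with h | h; exact absurd h hi0; exact h)
    · ext ⟨i, j⟩
      have hyj := congrFun hy j
      simp only [Pi.smul_apply, smul_eq_mul] at hyj ⊢
      calc ((P ⊗ₖ H) *ᵥ fun p => v p.1 * y p.2) (i, j)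
          = ∑ k, ∑ l, (v i * v k) * H j l * (v k * y l) := by
            simp only [Matrix.mulVec, dotProduct, Fintype.sum_prod_type, hP,
              Matrix.kroneckerMap_apply, Matrix.vecMulVec_apply]
        _ = v i * ((∑ k, (v k) ^ 2) * ∑ l, H j l * y l) := by
            simp only [Finset.mul_sum, Finset.sum_mul]
            rw [Finset.sum_comm]
            exact Finset.sum_congr rfl fun l _ => Finset.sum_congr rfl fun k _ => by ring
        _ = v i * (H *ᵥ y) j := by rw [hv, one_mul]; rfl
        _ = μ * (v i * y j) := by rw [hyj]; ring
end

section
/- Let ι be a finite nonempty type, let m ≥ 2, and for each i : ι let v i : Fin m → ℝ be a unit vector (Σ_k (v i k)^2 = 1) and H i a real symmetric n × n matrix (n ≥ 1) all of whose eigenvalues lie in the interval [−1, 1]. Consider the block-diagonal matrix T = blockDiagonal (fun i => (1/2) • (1 − (vecMulVec (v i) (v i)) ⊗ₖ (H i))). Then every H i is positive semidefinite if and only if the supremum of the spectrum of T equals 1/2. -/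
open Matrix Kronecker

/-!
Since `T` is block diagonal, its spectrum is the union of the spectra of the blocks
`(1 - Kᵢ) / 2` with `Kᵢ = vᵢ vᵢᵀ ⊗ Hᵢ`, so `sSup (spectrum ℝ T) = 1/2` says that no `Kᵢ` has a
negative eigenvalue while some `Kᵢ` has eigenvalue `0`. The eigenvalue `0` is always present,
because `vᵢ vᵢᵀ` is singular once `m ≥ 2`. If `Hᵢ` is positive semidefinite, so is `Kᵢ`.
Conversely, `Hᵢ y = ν y` gives `Kᵢ (vᵢ ⊗ y) = ν (vᵢ ⊗ y)` since `‖vᵢ‖ = 1`, so every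
eigenvalue of `Hᵢ` is one of `Kᵢ`.
-/

theorem spectrum.mem_smul_one_sub_iff {𝕜 A : Type*} [Field 𝕜] [Ring A] [Algebra 𝕜 A]
    {c : 𝕜} (hc : c ≠ 0) (a : A) (μ : 𝕜) :
    μ ∈ spectrum 𝕜 (c • (1 - a)) ↔ 1 - c⁻¹ * μ ∈ spectrum 𝕜 a := by
  have hfactor : algebraMap 𝕜 A μ - c • (1 - a) =
      Units.mk0 (-c) (neg_ne_zero.2 hc) • (algebraMap 𝕜 A (1 - c⁻¹ * μ) - a) := by
    rw [Units.smul_mk0, Algebra.algebraMap_eq_smul_one, Algebra.algebraMap_eq_smul_one, sub_smul,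
      one_smul, smul_sub (-c), smul_sub (-c), smul_smul, neg_mul, mul_inv_cancel_left₀ hc]
    module
  rw [spectrum.mem_iff, spectrum.mem_iff, hfactor, isUnit_smul_iff]

namespace Matrix

variable {K m n : Type*} [Field K] [Fintype m] [Fintype n]

theorem kronecker_mulVec_prod (A : Matrix m m K) (B : Matrix n n K) (x : m → K) (y : n → K) :
    (A ⊗ₖ B) *ᵥ (fun p => x p.1 * y p.2) = fun p => (A *ᵥ x) p.1 * (B *ᵥ y) p.2 := by
  ext ⟨i, j⟩
  simp only [mulVec, dotProduct, kroneckerMap_apply, Fintype.sum_prod_type, Finset.sum_mul_sum]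
  exact Finset.sum_congr rfl fun _ _ => Finset.sum_congr rfl fun _ _ => by ring

variable [DecidableEq m] [DecidableEq n]

theorem spectrum_blockDiagonal {R o : Type*} [CommRing R] [Fintype o] [DecidableEq o]
    (M : o → Matrix n n R) : spectrum R (blockDiagonal M) = ⋃ i, spectrum R (M i) := by
  ext μ
  have hsub : algebraMap R _ μ - blockDiagonal M = blockDiagonal fun i => algebraMap R _ μ - M i := by
    rw [Algebra.algebraMap_eq_smul_one, ← blockDiagonal_one, ← blockDiagonal_smul,
      ← blockDiagonal_sub]
    congr 1
    funext i
    simp [Algebra.algebraMap_eq_smul_one]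
  simp only [Set.mem_iUnion, spectrum.mem_iff, hsub, isUnit_iff_isUnit_det, det_blockDiagonal,
    IsUnit.prod_iff, Finset.mem_univ, true_implies, not_forall]

theorem mem_spectrum_iff_exists_mulVec_eq_smul (A : Matrix n n K) (μ : K) :
    μ ∈ spectrum K A ↔ ∃ x ≠ 0, A *ᵥ x = μ • x := by
  rw [← spectrum_toLin', ← Module.End.hasEigenvalue_iff_mem_spectrum, Module.End.hasEigenvalue_iff,
    Submodule.ne_bot_iff]
  simp only [Module.End.mem_eigenspace_iff, toLin'_apply]
  tauto

theorem mul_mem_spectrum_kronecker {A : Matrix m m K} {B : Matrix n n K} {a b : K}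
    (ha : a ∈ spectrum K A) (hb : b ∈ spectrum K B) : a * b ∈ spectrum K (A ⊗ₖ B) := by
  obtain ⟨x, hx, hAx⟩ := (mem_spectrum_iff_exists_mulVec_eq_smul A a).1 ha
  obtain ⟨y, hy, hBy⟩ := (mem_spectrum_iff_exists_mulVec_eq_smul B b).1 hb
  refine (mem_spectrum_iff_exists_mulVec_eq_smul _ _).2 ⟨fun p => x p.1 * y p.2, ?_, ?_⟩
  · obtain ⟨i, hi⟩ := Function.ne_iff.1 hx
    obtain ⟨j, hj⟩ := Function.ne_iff.1 hy
    exact Function.ne_iff.2 ⟨(i, j), mul_ne_zero hi hj⟩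
  · rw [kronecker_mulVec_prod, hAx, hBy]
    ext p
    simp only [Pi.smul_apply, smul_eq_mul]
    ring

theorem dotProduct_mem_spectrum_vecMulVec {u : n → K} (hu : u ≠ 0) (v : n → K) :
    v ⬝ᵥ u ∈ spectrum K (vecMulVec u v) :=
  (mem_spectrum_iff_exists_mulVec_eq_smul _ _).2 ⟨u, hu, by rw [vecMulVec_mulVec, op_smul_eq_smul]⟩

theorem zero_mem_spectrum_vecMulVec [Nontrivial n] (u v : n → K) :
    0 ∈ spectrum K (vecMulVec u v) := by
  rw [spectrum.zero_mem_iff, isUnit_iff_isUnit_det, det_vecMulVec]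
  exact not_isUnit_zero

theorem zero_mem_spectrum_kronecker_of_left [Nonempty n] {A : Matrix m m K}
    (hA : 0 ∈ spectrum K A) (B : Matrix n n K) : 0 ∈ spectrum K (A ⊗ₖ B) := by
  rw [spectrum.zero_mem_iff, isUnit_iff_isUnit_det, isUnit_iff_ne_zero, not_not] at hA ⊢
  rw [det_kronecker, hA, zero_pow Fintype.card_ne_zero, zero_mul]

end Matrix

theorem convexity_test_criterion_general
    (ι : Type*) [Fintype ι] [DecidableEq ι] [Nonempty ι]
    (m n : ℕ) (hm : 2 ≤ m) (hn : 1 ≤ n)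
    (v : ι → (Fin m → ℝ)) (hv : ∀ i, ∑ k : Fin m, (v i k) ^ 2 = 1)
    (H : ι → Matrix (Fin n) (Fin n) ℝ) (hH : ∀ i, (H i)ᵀ = H i)
    (T : Matrix ((Fin m × Fin n) × ι) ((Fin m × Fin n) × ι) ℝ)
    (hT : T = Matrix.blockDiagonal (fun i =>
      ((1 : ℝ) / 2) • ((1 : Matrix (Fin m × Fin n) (Fin m × Fin n) ℝ) -
        (vecMulVec (v i) (v i)) ⊗ₖ (H i)))) :
    (∀ i, (H i).PosSemidef) ↔ sSup (spectrum ℝ T) = 1 / 2 := by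
  have mem_spectrum_T (μ : ℝ) :
      μ ∈ spectrum ℝ T ↔ ∃ i, 1 - 2 * μ ∈ spectrum ℝ (vecMulVec (v i) (v i) ⊗ₖ H i) := by
    simp [hT, spectrum_blockDiagonal, spectrum.mem_smul_one_sub_iff]
  have hbdd : BddAbove (spectrum ℝ T) := (finite_spectrum T).bddAbove
  constructor
  · intro hpsd
    refine IsGreatest.csSup_eq ⟨(mem_spectrum_T _).2 ⟨Classical.arbitrary ι, ?_⟩, fun μ hμ => ?_⟩
    · have : Nontrivial (Fin m) := Fin.nontrivial_iff_two_le.2 hm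
      have : Nonempty (Fin n) := Fin.pos_iff_nonempty.1 hn
      simpa using zero_mem_spectrum_kronecker_of_left (zero_mem_spectrum_vecMulVec _ _) _
    · obtain ⟨i, hi⟩ := (mem_spectrum_T μ).1 hμ
      have hK : (vecMulVec (v i) (v i) ⊗ₖ H i).PosSemidef := by
        simpa using (posSemidef_vecMulVec_self_star (v i)).kronecker (hpsd i)
      have : 0 ≤ 1 - 2 * μ := (posSemidef_iff_isHermitian_and_spectrum_nonneg.1 hK).2 hi
      linarith
  · intro hsup i
    have hvv : v i ⬝ᵥ v i = 1 := by simpa [dotProduct, sq] using hv i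
    have hv0 : v i ≠ 0 := fun h => by simp [h] at hvv
    refine posSemidef_iff_isHermitian_and_spectrum_nonneg.2 ⟨hH i, fun ν hν => ?_⟩
    have hmem : (1 - ν) / 2 ∈ spectrum ℝ T := (mem_spectrum_T _).2 ⟨i, by
      rw [show 1 - 2 * ((1 - ν) / 2) = ν by ring]
      simpa [hvv] using mul_mem_spectrum_kronecker (dotProduct_mem_spectrum_vecMulVec hv0 (v i)) hν⟩
    have : (1 - ν) / 2 ≤ 1 / 2 := hsup ▸ le_csSup hbdd hmem
    show 0 ≤ ν
    linarith

theorem convexity_test_criterion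
    (ι : Type*) [Fintype ι] [DecidableEq ι] [Nonempty ι]
    (m n : ℕ) (hm : 2 ≤ m) (hn : 1 ≤ n)
    (v : ι → (Fin m → ℝ)) (hv : ∀ i, ∑ k : Fin m, (v i k) ^ 2 = 1)
    (H : ι → Matrix (Fin n) (Fin n) ℝ) (hH : ∀ i, (H i)ᵀ = H i)
    (hspec : ∀ i, ∀ μ ∈ spectrum ℝ (H i), μ ∈ Set.Icc (-1 : ℝ) 1)
    (T : Matrix ((Fin m × Fin n) × ι) ((Fin m × Fin n) × ι) ℝ)
    (hT : T = Matrix.blockDiagonal (fun i =>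
      ((1 : ℝ) / 2) • ((1 : Matrix (Fin m × Fin n) (Fin m × Fin n) ℝ) -
        (vecMulVec (v i) (v i)) ⊗ₖ (H i)))) :
    (∀ i, (H i).PosSemidef) ↔ sSup (spectrum ℝ T) = 1 / 2 :=
  convexity_test_criterion_general ι m n hm hn v hv H hH T hT
end
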